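/- Let m, n ≥ 0 be integers with p = 2m+n ≥ 1, and let G' be a finite labeled simple graph with v vertices and e edges such that every (m,n)-colored mixed graph with underlying graph G' admits a homomorphism to some (m,n)-colored mixed graph on at most k vertices. Then p^{k(k-1)/2} · k^{v} ≥ p^{e}. -/

import Mathlib

/-- The possible kinds of links from a vertex `u` to a vertex `v` in an
`(m,n)`-colored mixed graph: an arc `u → v` of one of `m` colors, an arc
`v → u` of one of `m` colors, or an (unoriented) edge of one of `n` colors. -/
inductive Link (m n : ℕ) : Type where
  | arcOut : Fin m → Link m n
  | arcIn : Fin m → Link m n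
  | edge : Fin n → Link m n

/-- The link as seen from the other endpoint. -/
def Link.flip {m n : ℕ} : Link m n → Link m n
  | .arcOut c => .arcIn c
  | .arcIn c => .arcOut c
  | .edge c => .edge c

/-- An `(m,n)`-colored mixed graph on vertex type `V`: between any two distinct
vertices there is at most one link (a colored arc in either direction or a
colored edge), and there are no loops. -/
structure CMGraph (m n : ℕ) (V : Type) where
  link : V → V → Option (Link m n)
  symm : ∀ u v, link v u = (link u v).map Link.flip
  loopless : ∀ v, link v v = none

/-- The underlying simple graph of an `(m,n)`-colored mixed graph. -/
def CMGraph.underlying {m n : ℕ} {V : Type} (G : CMGraph m n V) : SimpleGraph V where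
  Adj u v := (G.link u v).isSome
  symm := by
    refine ⟨?_⟩
    intro u v h
    rw [G.symm u v]
    rcases hx : G.link u v with _ | l
    · rw [hx] at h; simp at h
    · simp
  loopless := by
    refine ⟨?_⟩
    intro v h
    rw [G.loopless v] at h
    simp at h

/-- A homomorphism of `(m,n)`-colored mixed graphs: arcs map to arcs of the same
color and direction, edges map to edges of the same color. -/
def IsCMHom {m n : ℕ} {V W : Type} (G : CMGraph m n V) (H : CMGraph m n W)
    (f : V → W) : Prop :=
  ∀ u v l, G.link u v = some l → H.link (f u) (f v) = some l

/-- `G` admits a homomorphism to some `(m,n)`-colored mixed graph on at most `k`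
vertices, i.e. `χ_{(m,n)}(G) ≤ k`. -/
def CMChromAtMost {m n : ℕ} {V : Type} (G : CMGraph m n V) (k : ℕ) : Prop :=
  ∃ (W : Type) (inst : Fintype W) (H : CMGraph m n W) (f : V → W),
    @Fintype.card W inst ≤ k ∧ IsCMHom G H f

/-- Every `(m,n)`-colored mixed graph admitting a homomorphism from `G` has at
least `k` vertices, i.e. `χ_{(m,n)}(G) ≥ k`. -/
def CMChromAtLeast {m n : ℕ} {V : Type} (G : CMGraph m n V) (k : ℕ) : Prop :=
  ∀ (W : Type) (inst : Fintype W) (H : CMGraph m n W) (f : V → W),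
    IsCMHom G H f → k ≤ @Fintype.card W inst

/-- The acyclic chromatic number of `G` is at most `k`: there is a proper
`k`-coloring in which the union of any two color classes induces a forest. -/
def AcycChromAtMost {V : Type} (G : SimpleGraph V) (k : ℕ) : Prop :=
  ∃ c : V → Fin k, (∀ u v, G.Adj u v → c u ≠ c v) ∧
    ∀ i j : Fin k, (G.induce {v | c v = i ∨ c v = j}).IsAcyclic

/-- The edge set of `G` can be decomposed into `r` forests. -/
def ArbAtMost {V : Type} (G : SimpleGraph V) (r : ℕ) : Prop :=
  ∃ F : Fin r → SimpleGraph V,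
    (∀ i, F i ≤ G) ∧
    (∀ i, (F i).IsAcyclic) ∧
    (∀ u v, G.Adj u v → ∃ i, (F i).Adj u v) ∧
    (∀ i j, i ≠ j → ∀ u v, ¬ ((F i).Adj u v ∧ (F j).Adj u v))

/-- Every vertex of `G` has degree at most `d`. -/
def MaxDegAtMost {V : Type} (G : SimpleGraph V) (d : ℕ) : Prop :=
  ∀ v, (G.neighborSet v).ncard ≤ d

/-- `G` is `d`-degenerate: every nonempty (induced) subgraph has a vertex of
degree at most `d` in it. -/
def DegenAtMost {V : Type} (G : SimpleGraph V) (d : ℕ) : Prop :=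
  ∀ s : Set V, s.Nonempty → ∃ v ∈ s, (G.neighborSet v ∩ s).ncard ≤ d

/-!
Order the vertices of `G'` and read each labeling `c` of its edges by the `p` kinds of links
(from the smaller endpoint to the larger) as a mixed graph `M_c` with underlying graph `G'`;
distinct labelings give distinct graphs, so there are `p^e` of them. A homomorphism of `M_c` to a
graph on at most `k` vertices can be taken to land in a complete mixed graph on `Fin k`, i.e. in
a labeling of the `k(k-1)/2` pairs of `Fin k`. A mixed graph with known underlying graph is
determined by a homomorphism to a known target, so `c` is recovered from the vertex map (one of
`k^v`) and the target labeling (one of `p^(k(k-1)/2)`).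
-/

open SimpleGraph Function

namespace Link

variable {m n : ℕ}

@[simp] lemma flip_flip (l : Link m n) : l.flip.flip = l := by
  cases l <;> rfl

def equivSum : Link m n ≃ Fin m ⊕ Fin m ⊕ Fin n where
  toFun
    | .arcOut c => .inl c
    | .arcIn c => .inr (.inl c)
    | .edge c => .inr (.inr c)
  invFun
    | .inl c => .arcOut c
    | .inr (.inl c) => .arcIn c
    | .inr (.inr c) => .edge c
  left_inv l := by cases l <;> rfl
  right_inv s := by rcases s with c | c | c <;> rfl

instance : Fintype (Link m n) := Fintype.ofEquiv _ equivSum.symm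

lemma card_eq : Fintype.card (Link m n) = 2 * m + n := by
  simp [Fintype.card_congr equivSum, two_mul, add_assoc]

variable {X : Type} [LinearOrder X]

def orient (l : Link m n) (u v : X) : Link m n :=
  if u < v then l else l.flip

@[simp] lemma flip_orient (l : Link m n) (u v : X) : l.flip.orient u v = (l.orient u v).flip := by
  unfold orient; split_ifs <;> simp

lemma orient_swap (l : Link m n) {u v : X} (h : u ≠ v) : l.orient v u = (l.orient u v).flip := by
  unfold orient
  rcases h.lt_or_gt with huv | hvu
  · simp [huv, huv.not_gt]
  · simp [hvu, hvu.not_gt]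

@[simp] lemma orient_orient (l : Link m n) (u v : X) : (l.orient u v).orient u v = l := by
  unfold orient; split_ifs <;> simp

end Link

lemma SimpleGraph.natCard_edgeLabeling {V K : Type*} [Finite V] (G : SimpleGraph V) :
    Nat.card (G.EdgeLabeling K) = Nat.card K ^ G.edgeSet.ncard := by
  rw [EdgeLabeling, Nat.card_fun, Nat.card_coe_set_eq]

namespace CMGraph

variable {m n : ℕ} {V : Type}

@[ext] lemma ext {M N : CMGraph m n V} (h : M.link = N.link) : M = N := by
  cases M; cases N; congr

open scoped Classical in
/-- The label of an edge `{u, v}` is the link from the smaller endpoint to the larger one. -/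
noncomputable def ofEdgeLabeling [LinearOrder V] (G : SimpleGraph V)
    (C : G.EdgeLabeling (Link m n)) : CMGraph m n V where
  link u v := if h : G.Adj u v then some ((C.get u v h).orient u v) else none
  symm u v := by
    by_cases h : G.Adj u v
    · rw [dif_pos h.symm, dif_pos h, Option.map_some, C.get_comm, Link.orient_swap _ h.ne]
    · rw [dif_neg (mt G.adj_symm h), dif_neg h, Option.map_none]
  loopless v := dif_neg (G.loopless.irrefl v)

section ofEdgeLabeling

variable [LinearOrder V] {G : SimpleGraph V} {C : G.EdgeLabeling (Link m n)}

lemma ofEdgeLabeling_link_of_adj {u v : V} (h : G.Adj u v) :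
    (ofEdgeLabeling G C).link u v = some ((C.get u v h).orient u v) :=
  dif_pos h

@[simp] lemma underlying_ofEdgeLabeling : (ofEdgeLabeling G C).underlying = G := by
  ext u v
  by_cases h : G.Adj u v
  · simp [CMGraph.underlying, ofEdgeLabeling_link_of_adj h, h]
  · simp [CMGraph.underlying, ofEdgeLabeling, h]

variable (G) in
lemma ofEdgeLabeling_injective : Injective (ofEdgeLabeling (m := m) (n := n) G) := by
  intro C₁ C₂ hC
  ext u v huv
  have := congrFun₂ (congrArg CMGraph.link hC) u v
  rw [ofEdgeLabeling_link_of_adj huv, ofEdgeLabeling_link_of_adj huv] at this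
  simpa using congrArg (Link.orient · u v) (Option.some.inj this)

end ofEdgeLabeling

end CMGraph

section IsCMHom

variable {m n : ℕ} {V W X : Type} {M : CMGraph m n V} {H : CMGraph m n W} {T : CMGraph m n X}

lemma IsCMHom.comp {f : V → W} {g : W → X} (hf : IsCMHom M H f) (hg : IsCMHom H T g) :
    IsCMHom M T (g ∘ f) :=
  fun u v l hl => hg _ _ _ (hf u v l hl)

lemma IsCMHom.link_eq {f : V → W} (hf : IsCMHom M H f) {u v : V} (h : M.underlying.Adj u v) :
    M.link u v = H.link (f u) (f v) := by
  obtain ⟨l, hl⟩ := Option.isSome_iff_exists.1 h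
  rw [hl, hf u v l hl]

lemma CMGraph.eq_of_isCMHom {M' : CMGraph m n V} {f : V → W}
    (hM : M.underlying = M'.underlying) (hf : IsCMHom M H f) (hf' : IsCMHom M' H f) :
    M = M' := by
  refine CMGraph.ext (funext₂ fun u v => ?_)
  by_cases h : M.underlying.Adj u v
  · rw [hf.link_eq h, hf'.link_eq (hM ▸ h)]
  · have h' : ¬ M'.underlying.Adj u v := hM ▸ h
    simp only [CMGraph.underlying, Option.not_isSome_iff_eq_none] at h h'
    rw [h, h']

/-- Each pair in the image of `e` is labeled by the link of `H` it comes from, read upwards;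
the other pairs are labeled arbitrarily. -/
lemma CMGraph.exists_isCMHom_ofEdgeLabeling_top [Nonempty (Link m n)] [LinearOrder X]
    (H : CMGraph m n W) (e : W ↪ X) :
    ∃ C : TopEdgeLabeling X (Link m n), IsCMHom H (ofEdgeLabeling ⊤ C) e := by
  inhabit Link m n
  let up : W → W → Link m n := fun u v =>
    ((H.link u v).map (Link.orient · (e u) (e v))).getD default
  have up_comm : ∀ u v, up u v = up v u := by
    intro u v
    rcases eq_or_ne u v with rfl | huv
    · rfl
    · simp [up, H.symm u v, comp_def, Link.orient_swap _ (e.injective.ne huv)]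
  let C : TopEdgeLabeling X (Link m n) := fun x =>
    extend (Sym2.map e) (Sym2.lift ⟨up, up_comm⟩) (fun _ => default) x.1
  refine ⟨C, fun u v l hl => ?_⟩
  have huv : (⊤ : SimpleGraph X).Adj (e u) (e v) := by
    intro heq
    rw [e.injective heq, H.loopless] at hl
    cases hl
  have hC : C.get (e u) (e v) huv = l.orient (e u) (e v) := by
    simp only [EdgeLabeling.get, C]
    rw [← Sym2.map_mk, (Sym2.map.injective e.injective).extend_apply, Sym2.lift_mk]
    simp [up, hl]
  rw [ofEdgeLabeling_link_of_adj huv, hC, Link.orient_orient]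

lemma CMChromAtMost.exists_isCMHom_ofEdgeLabeling_top [Nonempty (Link m n)] {k : ℕ}
    (hM : CMChromAtMost M k) :
    ∃ (f : V → Fin k) (C : TopEdgeLabeling (Fin k) (Link m n)),
      IsCMHom M (CMGraph.ofEdgeLabeling ⊤ C) f := by
  obtain ⟨W, _, H, f, hcard, hf⟩ := hM
  obtain ⟨e⟩ : Nonempty (W ↪ Fin k) :=
    Function.Embedding.nonempty_of_card_le (by simpa using hcard)
  obtain ⟨C, hC⟩ := H.exists_isCMHom_ofEdgeLabeling_top e
  exact ⟨e ∘ f, C, hf.comp hC⟩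

end IsCMHom

/-- If `G'` has `v` vertices and `e` edges and every `(m,n)`-colored
mixed graph with underlying graph `G'` admits a homomorphism to some `(m,n)`-colored
mixed graph on at most `k` vertices, then `p^(k(k-1)/2) · k^v ≥ p^e` with `p = 2m+n`. -/
theorem counting_inequality_of_mixed_chromatic (m n k : ℕ) (hp : 1 ≤ 2 * m + n)
    (V : Type) [Fintype V] (G : SimpleGraph V)
    (h : ∀ M : CMGraph m n V, M.underlying = G → CMChromAtMost M k) :
    (2 * m + n) ^ (k * (k - 1) / 2) * k ^ (Fintype.card V) ≥ (2 * m + n) ^ G.edgeSet.ncard := by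
  have : Nonempty (Link m n) := Fintype.card_pos_iff.1 (Link.card_eq ▸ hp)
  let : LinearOrder V := LinearOrder.lift' _ (Fintype.equivFin V).injective
  choose f C hC using fun c : G.EdgeLabeling (Link m n) =>
    (h _ CMGraph.underlying_ofEdgeLabeling).exists_isCMHom_ofEdgeLabeling_top
  have hinj : Injective fun c => (f c, C c) := by
    intro c₁ c₂ hc
    obtain ⟨hf, hC'⟩ := Prod.mk.inj hc
    refine CMGraph.ofEdgeLabeling_injective G (CMGraph.eq_of_isCMHom ?_ (hC c₁) ?_)
    · simp only [CMGraph.underlying_ofEdgeLabeling]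
    · rw [hf, hC']; exact hC c₂
  calc (2 * m + n) ^ G.edgeSet.ncard = Nat.card (G.EdgeLabeling (Link m n)) := by
        rw [natCard_edgeLabeling, Nat.card_eq_fintype_card, Link.card_eq]
    _ ≤ Nat.card ((V → Fin k) × TopEdgeLabeling (Fin k) (Link m n)) :=
        Nat.card_le_card_of_injective _ hinj
    _ = (2 * m + n) ^ (k * (k - 1) / 2) * k ^ (Fintype.card V) := by
        rw [Nat.card_prod, Nat.card_eq_fintype_card, Nat.card_eq_fintype_card, card_topEdgeLabeling,
          Fintype.card_fun, Link.card_eq, Fintype.card_fin, Nat.choose_two_right,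
          mul_comm]
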